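/- arXiv:2408.15053 — 8 statements merged into one kernel-verified Lean document; each statement's English description precedes it below -/
import Mathlib

section
/- A real irrational number x is non-Liouville if and only if there exist a constant C > 0 and a positive integer N such that |e^{2πikx} - 1| ≥ C / k^N for all positive integers k. -/
open Real Complex

/-!
The quantity `‖e^{2πit} - 1‖ = 2 |sin (π t)|` lies between `4 ‖t‖` and `2π ‖t‖`, where `‖t‖` is
the distance from `t` to the nearest integer. So the bound in the theorem is, up to the constant,
`|k x - p| ≥ C / k^N` for all `k > 0` and all integers `p`; dividing by `k`, this is the failure
of rational approximations `p / k` of order `N + 1`, i.e. the non-Liouville property.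
-/

lemma exp_two_pi_I_mul_sub_intCast (t : ℝ) (p : ℤ) :
    Complex.exp (2 * π * I * ((t - p : ℝ) : ℂ)) = Complex.exp (2 * π * I * t) := by
  have h : 2 * π * I * ((t - p : ℝ) : ℂ) = 2 * π * I * t - p * (2 * π * I) := by
    push_cast; ring
  rw [h, Complex.exp_sub, exp_int_mul_two_pi_mul_I, div_one]

lemma norm_exp_two_pi_I_mul_sub_one_le (t : ℝ) (p : ℤ) :
    ‖Complex.exp (2 * π * I * t) - 1‖ ≤ 2 * π * |t - p| := by
  rw [← exp_two_pi_I_mul_sub_intCast t p]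
  calc ‖Complex.exp (2 * π * I * ((t - p : ℝ) : ℂ)) - 1‖
      = ‖Complex.exp (I * ((2 * π * (t - p) : ℝ) : ℂ)) - 1‖ := by push_cast; ring_nf
    _ ≤ ‖2 * π * (t - p)‖ := Real.norm_exp_I_mul_ofReal_sub_one_le
    _ = 2 * π * |t - p| := by rw [Real.norm_eq_abs, abs_mul, abs_of_pos two_pi_pos]

lemma four_mul_abs_sub_round_le_norm_exp_two_pi_I_mul_sub_one (t : ℝ) :
    4 * |t - round t| ≤ ‖Complex.exp (2 * π * I * t) - 1‖ := by
  set s := t - round t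
  have hs : |π * s| ≤ π / 2 := by
    rw [abs_mul, abs_of_pos pi_pos]
    nlinarith [abs_sub_round t, pi_pos]
  rw [← exp_two_pi_I_mul_sub_intCast t (round t)]
  calc 4 * |s| = 2 * (2 / π * |π * s|) := by
        rw [abs_mul, abs_of_pos pi_pos]; field_simp; ring
    _ ≤ 2 * |Real.sin (π * s)| := by gcongr; exact mul_abs_le_abs_sin hs
    _ = ‖2 * Real.sin (2 * π * s / 2)‖ := by
        rw [Real.norm_eq_abs, abs_mul, abs_two]; ring_nf
    _ = ‖Complex.exp (I * ((2 * π * s : ℝ) : ℂ)) - 1‖ :=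
        (norm_exp_I_mul_ofReal_sub_one _).symm
    _ = ‖Complex.exp (2 * π * I * s) - 1‖ := by push_cast; ring_nf

lemma abs_mul_sub_eq_mul_abs_sub_div {k : ℝ} (hk : 0 < k) (x y : ℝ) :
    |k * x - y| = k * |x - y / k| := by
  calc |k * x - y| = |k * (x - y / k)| := by rw [mul_sub, mul_div_cancel₀ _ hk.ne']
    _ = k * |x - y / k| := by rw [abs_mul, abs_of_pos hk]

lemma Liouville.exists_abs_mul_sub_lt {x : ℝ} (hx : Liouville x) {C : ℝ} (hC : 0 < C) (N : ℕ) :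
    ∃ k : ℕ, 0 < k ∧ ∃ p : ℤ, |k * x - p| < C / (k : ℝ) ^ N := by
  obtain ⟨k, ⟨p, -, hp⟩, hkC⟩ :=
    ((hx.frequently_exists_num (N + 2)).and_eventually
      (Filter.eventually_gt_atTop ⌈C⁻¹⌉₊)).exists
  have hkC : C⁻¹ < k := Nat.lt_of_ceil_lt hkC
  have hk : (0 : ℝ) < k := (inv_pos.mpr hC).trans hkC
  refine ⟨k, by exact_mod_cast hk, p, ?_⟩
  calc |k * x - p| = k * |x - p / k| := abs_mul_sub_eq_mul_abs_sub_div hk _ _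
    _ < k * (1 / (k : ℝ) ^ (N + 2)) := by gcongr
    _ = (k : ℝ)⁻¹ / (k : ℝ) ^ N := by field_simp; ring
    _ < C / (k : ℝ) ^ N := by gcongr; exact inv_lt_of_inv_lt₀ hC hkC

lemma Irrational.exists_pos_div_pow_le_abs_mul_sub {x : ℝ} (hx : Irrational x)
    (hL : ¬ Liouville x) :
    ∃ C : ℝ, 0 < C ∧ ∃ N : ℕ, 0 < N ∧ ∀ k : ℕ, 0 < k → ∀ p : ℤ,
      C / (k : ℝ) ^ N ≤ |k * x - p| := by
  simp only [Liouville, not_forall, not_exists, not_and, not_lt] at hL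
  obtain ⟨n, hn⟩ := hL
  refine ⟨1 / 2 ^ n, by positivity, n + 1, n.succ_pos, fun k hk p => ?_⟩
  have hk1 : (1 : ℝ) ≤ k := by exact_mod_cast hk
  have hk0 : (0 : ℝ) < k := by positivity
  -- the denominator `2 * k` exceeds `1` even when `k = 1`
  have h := hn (2 * p) (2 * k) (by omega) ((irrational_iff_ne_rational x).mp hx _ _ (by omega))
  have hpk : ((2 * p : ℤ) : ℝ) / ((2 * k : ℤ) : ℝ) = p / k := by push_cast; field_simp
  rw [hpk] at h
  push_cast at h
  calc 1 / 2 ^ n / (k : ℝ) ^ (n + 1) = 1 / (2 * k) ^ n / k := by ring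
    _ ≤ 1 / (2 * k) ^ n * k :=
        (div_le_self (by positivity) hk1).trans (le_mul_of_one_le_right (by positivity) hk1)
    _ ≤ |x - p / k| * k := by gcongr
    _ = |k * x - p| := by rw [abs_mul_sub_eq_mul_abs_sub_div hk0, mul_comm]

/-- An irrational real number `x` is non-Liouville iff there are `C > 0` and a positive
integer `N` with `|e^{2πikx} - 1| ≥ C / k^N` for all positive integers `k`. -/
theorem stmt_0 (x : ℝ) (hx : Irrational x) :
    ¬ Liouville x ↔
      ∃ C : ℝ, 0 < C ∧ ∃ N : ℕ, 0 < N ∧ ∀ k : ℕ, 0 < k →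
        C / (k : ℝ) ^ N ≤
          ‖Complex.exp (2 * Real.pi * Complex.I * (k : ℂ) * (x : ℂ)) - 1‖ := by
  have hexp (k : ℕ) : 2 * π * I * (k : ℂ) * (x : ℂ) = 2 * π * I * ((k * x : ℝ) : ℂ) := by
    push_cast; ring
  constructor
  · intro hL
    obtain ⟨C, hC, N, hN, hbound⟩ := hx.exists_pos_div_pow_le_abs_mul_sub hL
    refine ⟨4 * C, by positivity, N, hN, fun k hk => ?_⟩
    rw [hexp, mul_div_assoc]
    calc 4 * (C / (k : ℝ) ^ N) ≤ 4 * |k * x - round (k * x)| := by gcongr; exact hbound k hk _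
      _ ≤ _ := four_mul_abs_sub_round_le_norm_exp_two_pi_I_mul_sub_one _
  · rintro ⟨C, hC, N, -, hbound⟩ hL
    obtain ⟨k, hk, p, hp⟩ := hL.exists_abs_mul_sub_lt (div_pos hC two_pi_pos) N
    refine (hbound k hk).not_gt ?_
    calc _ ≤ 2 * π * |k * x - p| := hexp k ▸ norm_exp_two_pi_I_mul_sub_one_le _ p
      _ < 2 * π * (C / (2 * π) / (k : ℝ) ^ N) := by gcongr
      _ = C / (k : ℝ) ^ N := by field_simp
end

section
/- Let g : ℝ → ℝ be smooth with compact support and s ≠ 0. Then h(x) := s · Σ_{k=1}^∞ g'(x - ks) is smooth and satisfies ∫₀¹ h(x + st) dt = g(x) for all x ∈ ℝ. -/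
open Set Filter

private lemma aux_vanish (g : ℝ → ℝ) (hsupp : HasCompactSupport g)
    (s : ℝ) (hs : s ≠ 0) (x C : ℝ) :
    ∃ N : ℕ, ∀ y : ℝ, |y - x| ≤ C → ∀ k : ℕ, N ≤ k →
      y - ((k : ℝ) + 1) * s ∉ tsupport g := by
  obtain ⟨R, hR⟩ := (hsupp.isBounded).subset_closedBall 0
  obtain ⟨N, hN⟩ := exists_nat_gt ((|x| + C + R) / |s|)
  refine ⟨N, fun y hy k hk hmem => ?_⟩
  have hRz : |y - ((k : ℝ) + 1) * s| ≤ R := by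
    simpa [Real.dist_eq] using hR hmem
  have hs' : (0 : ℝ) < |s| := abs_pos.mpr hs
  have h1 : ((k : ℝ) + 1) * |s| ≤ |y| + R := by
    have := abs_sub_abs_le_abs_sub (((k : ℝ) + 1) * s) y
    have habs : |((k : ℝ) + 1) * s| = ((k : ℝ) + 1) * |s| := by
      rw [abs_mul, abs_of_nonneg (by positivity)]
    rw [abs_sub_comm] at hRz
    nlinarith [abs_nonneg y]
  have h2 : |y| ≤ |x| + C := by
    have := abs_sub_abs_le_abs_sub y x
    linarith
  have h3 : (N : ℝ) * |s| > |x| + C + R := by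
    rw [div_lt_iff₀ hs'] at hN
    linarith
  have h4 : (N : ℝ) ≤ (k : ℝ) := Nat.cast_le.mpr hk
  nlinarith

private lemma aux_deriv_zero (g : ℝ → ℝ) {y : ℝ} (hy : y ∉ tsupport g) :
    deriv g y = 0 := by
  have h0 : g =ᶠ[nhds y] 0 := notMem_tsupport_iff_eventuallyEq.mp hy
  rw [h0.deriv_eq]
  exact deriv_const y 0

/-- For smooth compactly supported `g` and `s ≠ 0`, the function
`h(x) := s · Σ_{k≥1} g'(x - ks)` is smooth and satisfies `∫₀¹ h(x + st) dt = g(x)`. -/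
theorem stmt_6 (g : ℝ → ℝ) (hg : ContDiff ℝ (⊤ : ℕ∞) g) (hsupp : HasCompactSupport g)
    (s : ℝ) (hs : s ≠ 0)
    (h : ℝ → ℝ) (hh : h = fun x : ℝ => s * ∑' k : ℕ, deriv g (x - ((k : ℝ) + 1) * s)) :
    ContDiff ℝ (⊤ : ℕ∞) h ∧ ∀ x : ℝ, (∫ t in (0:ℝ)..1, h (x + s * t)) = g x := by
  have hderiv : ContDiff ℝ (⊤ : ℕ∞) (deriv g) := by
    have h1 : ContDiff ℝ (((⊤ : ℕ∞) : WithTop ℕ∞) + 1) g := by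
      rw [show (((⊤ : ℕ∞) : WithTop ℕ∞) + 1) = ((⊤ : ℕ∞) : WithTop ℕ∞) from rfl]; exact hg
    exact (contDiff_succ_iff_deriv.mp h1).2.2
  have hFsmooth : ∀ (F : Finset ℕ),
      ContDiff ℝ (⊤ : ℕ∞) (fun y : ℝ => s * ∑ k ∈ F, deriv g (y - ((k : ℝ) + 1) * s)) := by
    intro F
    exact contDiff_const.mul <| ContDiff.sum fun k _ =>
      hderiv.comp (contDiff_id.sub contDiff_const)
  constructor
  · rw [contDiff_iff_contDiffAt]
    intro x₀
    obtain ⟨N, hN⟩ := aux_vanish g hsupp s hs x₀ 1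
    have heq : h =ᶠ[nhds x₀]
        (fun y : ℝ => s * ∑ k ∈ Finset.range N, deriv g (y - ((k : ℝ) + 1) * s)) := by
      filter_upwards [Metric.ball_mem_nhds x₀ one_pos] with y hy
      rw [hh]
      dsimp only
      congr 1
      refine tsum_eq_sum fun k hk => ?_
      have hk' : N ≤ k := by have := Finset.mem_range.not.mp hk; omega
      exact aux_deriv_zero g (hN y (le_of_lt (by simpa [Real.dist_eq] using hy)) k hk')
    exact ((hFsmooth (Finset.range N)).contDiffAt).congr_of_eventuallyEq heq
  · intro x
    obtain ⟨N, hN⟩ := aux_vanish g hsupp s hs x (|s| + 1)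
    have hcongr : ∀ t ∈ uIcc (0:ℝ) 1,
        h (x + s * t) = s * ∑ k ∈ Finset.range (N + 1),
          deriv g (x + s * t - ((k : ℝ) + 1) * s) := by
      intro t ht
      rw [hh]
      dsimp only
      congr 1
      refine tsum_eq_sum fun k hk => ?_
      have hk' : N ≤ k := by
        have := Finset.mem_range.not.mp hk
        omega
      have htb : |x + s * t - x| ≤ |s| + 1 := by
        rw [uIcc_of_le zero_le_one] at ht
        have h1 : |t| ≤ 1 := abs_le.mpr ⟨by linarith [ht.1], ht.2⟩
        calc |x + s * t - x| = |s| * |t| := by rw [show x + s * t - x = s * t by ring, abs_mul]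
        _ ≤ |s| * 1 := by nlinarith [abs_nonneg s]
        _ ≤ |s| + 1 := by linarith
      exact aux_deriv_zero g (hN _ htb k hk')
    rw [intervalIntegral.integral_congr hcongr]
    have hint : ∀ k : ℕ,
        IntervalIntegrable (fun t => s * deriv g (x + s * t - ((k : ℝ) + 1) * s))
          MeasureTheory.volume 0 1 := by
      intro k
      have hc : Continuous fun t : ℝ => x + s * t - ((k : ℝ) + 1) * s := by fun_prop
      exact (continuous_const.mul (hderiv.continuous.comp hc)).intervalIntegrable _ _
    have : (∫ t in (0:ℝ)..1, s * ∑ k ∈ Finset.range (N + 1),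
          deriv g (x + s * t - ((k : ℝ) + 1) * s))
        = ∑ k ∈ Finset.range (N + 1), ∫ t in (0:ℝ)..1,
          s * deriv g (x + s * t - ((k : ℝ) + 1) * s) := by
      rw [← intervalIntegral.integral_finset_sum (fun k _ => hint k)]
      congr 1
      ext t
      rw [Finset.mul_sum]
    rw [this]
    have hkey : ∀ k : ℕ, (∫ t in (0:ℝ)..1,
        s * deriv g (x + s * t - ((k : ℝ) + 1) * s))
        = g (x - (k : ℝ) * s) - g (x - ((k : ℝ) + 1) * s) := by
      intro k
      have hderivAt : ∀ t ∈ uIcc (0:ℝ) 1,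
          HasDerivAt (fun u => g (x + s * u - ((k : ℝ) + 1) * s))
            (s * deriv g (x + s * t - ((k : ℝ) + 1) * s)) t := by
        intro t _
        have hg' : HasDerivAt g (deriv g (x + s * t - ((k : ℝ) + 1) * s))
            (x + s * t - ((k : ℝ) + 1) * s) :=
          ((hg.differentiable (by simp)) _).hasDerivAt
        have hinner : HasDerivAt (fun u : ℝ => x + s * u - ((k : ℝ) + 1) * s) s t := by
          simpa using (((hasDerivAt_id t).const_mul s).const_add x).sub_const (((k : ℝ) + 1) * s)
        simpa [mul_comm, Function.comp_def] using hg'.comp t hinner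
      rw [intervalIntegral.integral_eq_sub_of_hasDerivAt hderivAt
        (hint k)]
      ring_nf
    have hsum : ∑ k ∈ Finset.range (N + 1), (∫ t in (0:ℝ)..1,
        s * deriv g (x + s * t - ((k : ℝ) + 1) * s))
        = ∑ k ∈ Finset.range (N + 1),
          ((fun k : ℕ => g (x - (k : ℝ) * s)) k - (fun k : ℕ => g (x - (k : ℝ) * s)) (k + 1)) := by
      refine Finset.sum_congr rfl fun k _ => ?_
      rw [hkey k]
      push_cast
      ring_nf
    rw [hsum, Finset.sum_range_sub']
    have hlast : g (x - ((N : ℝ) + 1) * s) = 0 := by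
      refine image_eq_zero_of_notMem_tsupport (hN x (by simp; positivity) N le_rfl)
    push_cast
    simp [hlast]
end

section
/- For s ≠ 0, the operator β_s, (β_s f)(x) = ∫₀¹ f(x+st) dt, is injective on the space of smooth functions f : ℝ → ℝ for which both limits lim_{x→+∞} f(x) and lim_{x→-∞} f(x) exist in ℝ. -/
open Filter

/-- For `s ≠ 0`, the operator `β_s` is injective on the space of smooth functions
having finite limits at both `+∞` and `-∞`. -/
theorem stmt_8 (s : ℝ) (hs : s ≠ 0) (f g : ℝ → ℝ)
    (hf : ContDiff ℝ (⊤ : ℕ∞) f) (hg : ContDiff ℝ (⊤ : ℕ∞) g)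
    (hf_lim : (∃ L : ℝ, Tendsto f atTop (nhds L)) ∧ ∃ L : ℝ, Tendsto f atBot (nhds L))
    (hg_lim : (∃ L : ℝ, Tendsto g atTop (nhds L)) ∧ ∃ L : ℝ, Tendsto g atBot (nhds L))
    (heq : ∀ x : ℝ, (∫ t in (0:ℝ)..1, f (x + s * t)) = ∫ t in (0:ℝ)..1, g (x + s * t)) :
    f = g := by
  set h : ℝ → ℝ := fun x => f x - g x with hhdef
  have hhc : Continuous h := hf.continuous.sub hg.continuous
  -- the integral of h over any interval of length s vanishes
  have hint : ∀ x : ℝ, (∫ u in x..x + s, h u) = 0 := by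
    intro x
    have h1 : (∫ t in (0:ℝ)..1, h (s * t + x)) = 0 := by
      have : (∫ t in (0:ℝ)..1, h (s * t + x))
          = (∫ t in (0:ℝ)..1, f (x + s * t)) - ∫ t in (0:ℝ)..1, g (x + s * t) := by
        rw [← intervalIntegral.integral_sub]
        · simp only [hhdef]
          congr 1
          ext t
          ring_nf
        · exact (hf.continuous.comp (by continuity)).intervalIntegrable _ _
        · exact (hg.continuous.comp (by continuity)).intervalIntegrable _ _
      rw [this, heq x, sub_self]
    rw [intervalIntegral.integral_comp_mul_add (a := (0:ℝ)) (b := 1) h hs x] at h1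
    have : (∫ u in s * 0 + x..s * 1 + x, h u) = 0 := by
      have h3 := congrArg (fun y => s * y) h1
      simp only [smul_eq_mul] at h3
      rw [← mul_assoc, mul_inv_cancel₀ hs, one_mul] at h3
      simpa using h3
    simpa [mul_comm, add_comm] using this
  -- the antiderivative H
  set H : ℝ → ℝ := fun x => ∫ u in (0:ℝ)..x, h u with hHdef
  have hHd : ∀ x : ℝ, HasDerivAt H (h x) x := fun x =>
    intervalIntegral.integral_hasDerivAt_right (hhc.intervalIntegrable 0 x)
      (hhc.stronglyMeasurableAtFilter MeasureTheory.volume _) hhc.continuousAt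
  have hHper : ∀ x : ℝ, H (x + s) = H x := by
    intro x
    have hadd := intervalIntegral.integral_add_adjacent_intervals
      (hhc.intervalIntegrable (μ := MeasureTheory.volume) 0 x)
      (hhc.intervalIntegrable (μ := MeasureTheory.volume) x (x + s))
    simp only [hHdef]
    rw [← hadd, hint x, add_zero]
  -- h is s-periodic
  have hper : Function.Periodic h s := by
    intro x
    have d1 : HasDerivAt (fun y => H (y + s)) (h (x + s)) x := by
      have := (hHd (x + s)).comp x ((hasDerivAt_id x).add_const s)
      simpa [Function.comp_def] using this
    have d2 : HasDerivAt (fun y => H (y + s)) (h x) x := by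
      have hfun : (fun y => H (y + s)) = H := funext hHper
      rw [hfun]; exact hHd x
    exact d1.unique d2
  -- h has a limit L at +∞
  obtain ⟨L₁, hL₁⟩ := hf_lim.1
  obtain ⟨L₂, hL₂⟩ := hg_lim.1
  have hL : Tendsto h atTop (nhds (L₁ - L₂)) := hL₁.sub hL₂
  -- h is |s|-periodic
  have hper' : Function.Periodic h |s| := by
    rcases abs_choice s with habs | habs
    · rwa [habs]
    · rw [habs]; exact hper.neg
  have habs_pos : (0:ℝ) < |s| := abs_pos.mpr hs
  -- h is constant
  have hconst : ∀ x : ℝ, h x = L₁ - L₂ := by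
    intro x
    have hseq : Tendsto (fun n : ℕ => x + n * |s|) atTop atTop := by
      apply tendsto_atTop_add_const_left
      exact Tendsto.atTop_mul_const habs_pos tendsto_natCast_atTop_atTop
    have h1 : Tendsto (fun n : ℕ => h (x + n * |s|)) atTop (nhds (L₁ - L₂)) :=
      hL.comp hseq
    have h2 : (fun n : ℕ => h (x + n * |s|)) = fun _ => h x := by
      funext n
      exact hper'.nat_mul n x
    rw [h2] at h1
    exact (tendsto_nhds_unique h1 tendsto_const_nhds).symm
  -- L = 0
  have hL0 : L₁ - L₂ = 0 := by
    have := hint 0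
    have hco : (∫ u in (0:ℝ)..0 + s, h u) = (0 + s - 0) • (L₁ - L₂) := by
      rw [show h = fun _ => L₁ - L₂ from funext hconst]
      exact intervalIntegral.integral_const _
    rw [hco] at this
    simpa [hs] using this
  funext x
  have := hconst x
  rw [hL0] at this
  simpa [hhdef, sub_eq_zero] using this
end

section
/- Let V be a finite-dimensional real normed space with unit sphere S, and A ∈ End(V) an endomorphism all of whose complex eigenvalues are real. Then for every v ∈ S, the limit lim_{t→∞} e^{tA}v / ‖e^{tA}v‖ exists in S and is a fixed point of the flow x ↦ e^{tA}x/‖e^{tA}x‖ for all t ∈ ℝ. -/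
/-!
Since every complex eigenvalue of `A` is real, `V` is the sum of the generalized eigenspaces
of `A`, and on the one for `μ` the flow is `e^{tA} x = e^{μt} ∑_{k<n} t^k/k! (A - μ)^k x`.
So `e^{tA} v` is a finite combination of the vectors `y_{μ,k} = (A - μ)^k x_μ` with
coefficients `e^{μt} t^k / k!`. The coefficient of the lexicographically largest `(μ, k)` with
`y_{μ,k} ≠ 0` dominates all the others, so the direction of `e^{tA} v` converges to that of
`y_{μ,k}`. This vector is an eigenvector, as `(A - μ) y_{μ,k} = y_{μ,k+1} = 0`, hence a fixed
point of the projective flow.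
-/

open Filter Topology NormedSpace

section Polynomial

open Polynomial

theorem Polynomial.ker_aeval_prod_eq_iSup {R M ι : Type*} [CommRing R] [AddCommGroup M]
    [Module R M] (f : Module.End R M) (p : ι → R[X]) (s : Finset ι)
    (hp : (s : Set ι).Pairwise fun i j => IsCoprime (p i) (p j)) :
    LinearMap.ker (aeval f (∏ i ∈ s, p i)) = ⨆ i ∈ s, LinearMap.ker (aeval f (p i)) := by
  classical
  induction s using Finset.induction_on with
  | empty => simp [Module.End.one_eq_id]
  | insert a s has ih =>
    rw [Finset.coe_insert, Set.pairwise_insert] at hp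
    rw [Finset.prod_insert has, ← sup_ker_aeval_eq_ker_aeval_mul_of_coprime f
      (IsCoprime.prod_right fun i hi => (hp.2 i hi (ne_of_mem_of_not_mem hi has).symm).1),
      ih hp.1, Finset.iSup_insert]

theorem Polynomial.splits_of_forall_im_eq_zero {p : ℝ[X]}
    (hp : ∀ z ∈ (p.map (algebraMap ℝ ℂ)).roots, z.im = 0) : p.Splits :=
  Splits.of_splits_map _ (IsAlgClosed.splits _) fun z hz => ⟨z.re, Complex.ext rfl (hp z hz).symm⟩

theorem Module.End.iSup_maxGenEigenspace_eq_top_of_splits {K V : Type*} [Field K]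
    [AddCommGroup V] [Module K V] [FiniteDimensional K V] (f : Module.End K V)
    (hf : f.charpoly.Splits) : ⨆ μ, f.maxGenEigenspace μ = ⊤ := by
  classical
  set m := f.charpoly.roots
  have hprod : f.charpoly = ∏ μ ∈ m.toFinset, (X - C μ) ^ m.count μ := by
    conv_lhs => rw [hf.eq_prod_roots_of_monic (LinearMap.charpoly_monic f)]
    exact Finset.prod_multiset_map_count _ _
  have hcop : (m.toFinset : Set K).Pairwise fun μ ν =>
      IsCoprime ((X - C μ) ^ m.count μ) ((X - C ν) ^ m.count ν) :=
    fun μ _ ν _ hμν => (pairwise_coprime_X_sub_C Function.injective_id hμν).pow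
  rw [eq_top_iff]
  calc ⊤ = LinearMap.ker (aeval f f.charpoly) := by rw [LinearMap.aeval_self_charpoly]; simp
    _ = ⨆ μ ∈ m.toFinset, LinearMap.ker (aeval f ((X - C μ) ^ m.count μ)) := by
      rw [hprod, ker_aeval_prod_eq_iSup f _ _ hcop]
    _ ≤ ⨆ μ, f.maxGenEigenspace μ := iSup₂_le fun μ _ => by
      simp only [map_pow, map_sub, aeval_X, aeval_C, Algebra.algebraMap_eq_smul_one]
      rw [← Module.End.genEigenspace_nat]
      exact (f.genEigenspace_le_maximal μ _).trans (le_iSup _ μ)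

end Polynomial

open scoped Nat

noncomputable def expPolyTerm (p : ℝ × ℕ) (t : ℝ) : ℝ := Real.exp (p.1 * t) * (t ^ p.2 / p.2 !)

theorem tendsto_expPolyTerm_div_of_toLex_lt {p q : ℝ × ℕ} (h : toLex p < toLex q) :
    Tendsto (fun t => expPolyTerm p t / expPolyTerm q t) atTop (𝓝 0) := by
  have hlim : Tendsto (fun t : ℝ => t ^ ((p.2 : ℝ) - q.2) * Real.exp (-(q.1 - p.1) * t))
      atTop (𝓝 0) := by
    rcases Prod.Lex.toLex_lt_toLex.1 h with h1 | ⟨h1, h2⟩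
    · exact tendsto_rpow_mul_exp_neg_mul_atTop_nhds_zero _ _ (sub_pos.2 h1)
    · simpa [h1] using tendsto_rpow_neg_atTop (sub_pos.2 (Nat.cast_lt (α := ℝ).2 h2))
  have := hlim.const_mul ((q.2 ! : ℝ) / p.2 !)
  rw [mul_zero] at this
  refine this.congr' ?_
  filter_upwards [eventually_gt_atTop 0] with t ht
  have hpow : t ^ ((p.2 : ℝ) - q.2) = t ^ p.2 / t ^ q.2 := by
    rw [Real.rpow_sub ht, Real.rpow_natCast, Real.rpow_natCast]
  have hexp : Real.exp (-(q.1 - p.1) * t) = Real.exp (p.1 * t) / Real.exp (q.1 * t) := by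
    rw [← Real.exp_sub]; ring_nf
  rw [hpow, hexp, expPolyTerm, expPolyTerm]
  field_simp

theorem NormedSpace.exp_smul_eq_exp_mul_smul_exp_smul_sub {𝔸 : Type*} [NormedRing 𝔸]
    [NormedAlgebra ℝ 𝔸] [CompleteSpace 𝔸] (a : 𝔸) (μ t : ℝ) :
    exp (t • a) = Real.exp (μ * t) • exp (t • (a - μ • 1)) := by
  -- `exp_add_of_commute` is stated for normed `ℚ`-algebras.
  let : NormedAlgebra ℚ 𝔸 := .restrictScalars ℚ ℝ 𝔸
  have hsplit : t • a = algebraMap ℝ 𝔸 (μ * t) + t • (a - μ • 1) := by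
    rw [Algebra.algebraMap_eq_smul_one, smul_sub, smul_smul, mul_comm]
    abel
  rw [hsplit, exp_add_of_commute (Algebra.commutes _ _), ← algebraMap_exp_comm,
    Real.exp_eq_exp_ℝ]
  exact (Algebra.smul_def _ _).symm

section

variable {V : Type*} [NormedAddCommGroup V] [NormedSpace ℝ V]

theorem Filter.Tendsto.normalize {α : Type*} {l : Filter α} {f : α → V} {w : V}
    (hf : Tendsto f l (𝓝 w)) (hw : w ≠ 0) :
    Tendsto (fun x => normalize (f x)) l (𝓝 (normalize w)) :=
  (hf.norm.inv₀ (norm_ne_zero_iff.2 hw)).smul hf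

theorem tendsto_normalize_sum_of_dominant {α ι : Type*} {l : Filter α} (s : Finset ι)
    (f : ι → α → ℝ) (y : ι → V) {i₀ : ι} (hi₀ : i₀ ∈ s) (hy : y i₀ ≠ 0)
    (hpos : ∀ᶠ t in l, 0 < f i₀ t)
    (hdom : ∀ i ∈ s, i ≠ i₀ → y i ≠ 0 → Tendsto (fun t => f i t / f i₀ t) l (𝓝 0)) :
    Tendsto (fun t => normalize (∑ i ∈ s, f i t • y i)) l (𝓝 (normalize (y i₀))) := by
  classical
  have hratio : Tendsto (fun t => ∑ i ∈ s, (f i t / f i₀ t) • y i) l (𝓝 (y i₀)) := by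
    rw [← Finset.sum_ite_eq_of_mem' s i₀ y hi₀]
    refine tendsto_finsetSum _ fun i hi => ?_
    split_ifs with h
    · subst h
      refine tendsto_const_nhds.congr' ?_
      filter_upwards [hpos] with t ht
      rw [div_self ht.ne', one_smul]
    · by_cases hyi : y i = 0
      · simp only [hyi, smul_zero]; exact tendsto_const_nhds
      · simpa using (hdom i hi h hyi).smul_const (y i)
  refine (hratio.normalize hy).congr' ?_
  filter_upwards [hpos] with t ht
  rw [← normalize_smul_of_pos ht, Finset.smul_sum]
  refine congrArg _ (Finset.sum_congr rfl fun i _ => ?_)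
  rw [smul_smul, mul_div_cancel₀ _ ht.ne']

theorem ContinuousLinearMap.pow_apply_eq_zero_of_le {N : V →L[ℝ] V} {x : V} {k l : ℕ}
    (hkl : k ≤ l) (hx : (N ^ k) x = 0) : (N ^ l) x = 0 := by
  obtain ⟨j, rfl⟩ := Nat.exists_eq_add_of_le hkl
  rw [add_comm, pow_add, mul_apply_eq_comp, hx, map_zero]

theorem ContinuousLinearMap.apply_pow_eq_smul_of_pow_succ_apply_eq_zero {A : V →L[ℝ] V}
    {μ : ℝ} {x : V} {k : ℕ} (hx : ((A - μ • (1 : V →L[ℝ] V)) ^ (k + 1)) x = 0) :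
    A (((A - μ • (1 : V →L[ℝ] V)) ^ k) x) = μ • ((A - μ • (1 : V →L[ℝ] V)) ^ k) x := by
  rwa [pow_succ', mul_apply_eq_comp, sub_apply, smul_apply, one_apply_eq_self,
    sub_eq_zero] at hx

theorem ContinuousLinearMap.pow_sub_smul_one_finrank_apply_eq_zero [FiniteDimensional ℝ V]
    {A : V →L[ℝ] V} {μ : ℝ} {x : V} (hx : x ∈ Module.End.maxGenEigenspace (A : V →ₗ[ℝ] V) μ) :
    ((A - μ • (1 : V →L[ℝ] V)) ^ Module.finrank ℝ V) x = 0 := by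
  have hcoe : (((A - μ • (1 : V →L[ℝ] V)) ^ Module.finrank ℝ V : V →L[ℝ] V) : V →ₗ[ℝ] V) =
      ((A : V →ₗ[ℝ] V) - μ • 1) ^ Module.finrank ℝ V := by
    push_cast; rfl
  rwa [Module.End.maxGenEigenspace_eq_genEigenspace_finrank, Module.End.mem_genEigenspace_nat,
    ← hcoe, LinearMap.mem_ker] at hx

end

section

variable {V : Type*} [NormedAddCommGroup V] [NormedSpace ℝ V] [CompleteSpace V]

theorem NormedSpace.exp_smul_apply_of_pow_apply_eq_zero (N : V →L[ℝ] V) {n : ℕ} {x : V}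
    (hx : (N ^ n) x = 0) (t : ℝ) :
    exp (t • N) x = ∑ k ∈ Finset.range n, (t ^ k / k !) • (N ^ k) x := by
  have hsum := (exp_series_hasSum_exp' (𝕂 := ℝ) (t • N)).mapL (ContinuousLinearMap.apply ℝ V x)
  refine hsum.unique (hasSum_sum_of_ne_finset_zero fun k hk => ?_) |>.trans
    (Finset.sum_congr rfl fun k _ => ?_)
  · simp [smul_pow, N.pow_apply_eq_zero_of_le (by simpa using hk) hx]
  · simp only [ContinuousLinearMap.apply_apply, smul_pow, smul_apply, smul_smul, div_eq_inv_mul]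

theorem exp_smul_apply_sum_eq_sum_expPolyTerm (A : V →L[ℝ] V) (S : Finset ℝ) (x : ℝ → V)
    {n : ℕ} (hx : ∀ μ ∈ S, ((A - μ • (1 : V →L[ℝ] V)) ^ n) (x μ) = 0) (t : ℝ) :
    exp (t • A) (∑ μ ∈ S, x μ) =
      ∑ p ∈ S ×ˢ Finset.range n, expPolyTerm p t • ((A - p.1 • (1 : V →L[ℝ] V)) ^ p.2) (x p.1) := by
  rw [map_sum, Finset.sum_product]
  refine Finset.sum_congr rfl fun μ hμ => ?_
  rw [exp_smul_eq_exp_mul_smul_exp_smul_sub A μ, smul_apply,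
    exp_smul_apply_of_pow_apply_eq_zero _ (hx μ hμ), Finset.smul_sum]
  simp only [smul_smul, expPolyTerm]

theorem normalize_exp_smul_apply_of_apply_eq_smul (A : V →L[ℝ] V) {μ : ℝ} {w : V}
    (hw : A w = μ • w) (t : ℝ) : normalize (exp (t • A) w) = normalize w := by
  have hN : ((A - μ • (1 : V →L[ℝ] V)) ^ 1) w = 0 := by simp [hw]
  rw [exp_smul_eq_exp_mul_smul_exp_smul_sub A μ, smul_apply,
    exp_smul_apply_of_pow_apply_eq_zero _ hN]
  simp [normalize_smul_of_pos (Real.exp_pos _)]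

theorem exists_eigenvector_tendsto_normalize_exp_smul_apply (A : V →L[ℝ] V) (S : Finset ℝ)
    (x : ℝ → V) {n : ℕ} (hx : ∀ μ ∈ S, ((A - μ • (1 : V →L[ℝ] V)) ^ n) (x μ) = 0)
    (hv : ∑ μ ∈ S, x μ ≠ 0) :
    ∃ μ : ℝ, ∃ w : V, ‖w‖ = 1 ∧ A w = μ • w ∧
      Tendsto (fun t : ℝ => normalize (exp (t • A) (∑ μ ∈ S, x μ))) atTop (𝓝 w) := by
  classical
  have hexp := exp_smul_apply_sum_eq_sum_expPolyTerm A S x hx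
  set y : ℝ × ℕ → V := fun p => ((A - p.1 • (1 : V →L[ℝ] V)) ^ p.2) (x p.1)
  set s := S ×ˢ Finset.range n
  have hne : (s.filter (y · ≠ 0)).Nonempty := by
    rw [Finset.filter_nonempty_iff]
    by_contra! hzero
    have h0 := hexp 0
    rw [zero_smul, exp_zero, one_apply_eq_self] at h0
    exact hv (h0.trans (Finset.sum_eq_zero fun p hp => smul_eq_zero_of_right _ (hzero p hp)))
  obtain ⟨p₀, hp₀, hmax⟩ := Finset.exists_max_image _ toLex hne
  rw [Finset.mem_filter] at hp₀
  have hdom : ∀ p ∈ s, p ≠ p₀ → y p ≠ 0 → toLex p < toLex p₀ := fun p hp hne hyp =>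
    (hmax p (Finset.mem_filter.2 ⟨hp, hyp⟩)).lt_of_ne (toLex.injective.ne hne)
  have heig : A (y p₀) = p₀.1 • y p₀ := by
    refine ContinuousLinearMap.apply_pow_eq_smul_of_pow_succ_apply_eq_zero ?_
    have hμ₀ := (Finset.mem_product.1 hp₀.1).1
    by_cases hlt : p₀.2 + 1 < n
    · by_contra h
      have := hdom (p₀.1, p₀.2 + 1) (Finset.mem_product.2 ⟨hμ₀, Finset.mem_range.2 hlt⟩)
        (by simp [Prod.ext_iff]) h
      simp [Prod.Lex.toLex_lt_toLex] at this
    · exact ContinuousLinearMap.pow_apply_eq_zero_of_le (not_lt.1 hlt) (hx _ hμ₀)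
  refine ⟨p₀.1, normalize (y p₀), norm_normalize hp₀.2, ?_, ?_⟩
  · rw [NormedSpace.normalize, map_smul, heig, smul_comm]
  · simp_rw [hexp]
    exact tendsto_normalize_sum_of_dominant s expPolyTerm y hp₀.1 hp₀.2
      ((eventually_gt_atTop 0).mono fun t ht => by unfold expPolyTerm; positivity)
      fun p hp hne hyp => tendsto_expPolyTerm_div_of_toLex_lt (hdom p hp hne hyp)

end

/-- For an endomorphism `A` of a finite-dimensional real normed space whose complex
eigenvalues are all real, the projective flow `v ↦ e^{tA}v/‖e^{tA}v‖` on the unit sphere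
has a limit as `t → ∞`, which is a fixed point of the flow. -/
theorem stmt_12 (V : Type*) [NormedAddCommGroup V] [NormedSpace ℝ V]
    [FiniteDimensional ℝ V] (A : V →L[ℝ] V)
    (hreal : ∀ z : ℂ,
      z ∈ ((LinearMap.charpoly (A : V →ₗ[ℝ] V)).map (algebraMap ℝ ℂ)).roots → z.im = 0)
    (v : V) (hv : ‖v‖ = 1) :
    ∃ w : V, ‖w‖ = 1 ∧
      Tendsto (fun t : ℝ => ‖NormedSpace.exp (t • A) v‖⁻¹ • NormedSpace.exp (t • A) v)
        atTop (nhds w) ∧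
      ∀ t : ℝ, ‖NormedSpace.exp (t • A) w‖⁻¹ • NormedSpace.exp (t • A) w = w := by
  have htop := Module.End.iSup_maxGenEigenspace_eq_top_of_splits (A : V →ₗ[ℝ] V)
    (Polynomial.splits_of_forall_im_eq_zero hreal)
  obtain ⟨c, hc, hcv⟩ := (Submodule.mem_iSup_iff_exists_finsupp _ v).1 (htop ▸ Submodule.mem_top)
  rw [Finsupp.sum] at hcv
  obtain ⟨μ, w, hw, hAw, hlim⟩ := exists_eigenvector_tendsto_normalize_exp_smul_apply A
    c.support c (fun μ _ => ContinuousLinearMap.pow_sub_smul_one_finrank_apply_eq_zero (hc μ))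
    (hcv ▸ norm_ne_zero_iff.1 (hv ▸ one_ne_zero))
  refine ⟨w, hw, hcv ▸ hlim, fun t => ?_⟩
  exact (normalize_exp_smul_apply_of_apply_eq_smul A hAw t).trans
    (normalize_eq_self_of_norm_eq_one hw)
end

section
/- Let V be a finite-dimensional real vector space and A ∈ End(V). Then there exist unique pairwise commuting endomorphisms A_n, A_h, A_e with A = A_n + A_h + A_e, where A_n is nilpotent, A_h is diagonalizable over ℝ, and A_e is semisimple with purely imaginary spectrum. Moreover an endomorphism B commutes with A if and only if it commutes with each of A_n, A_h, A_e. -/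
/-!
Existence. By Jordan–Chevalley, `A = N + S` with `N` nilpotent and `S` semisimple, both
polynomials in `A`. Every irreducible real polynomial divides some `(X - a)² + b²`, so by the
Chinese remainder theorem, applied to the factorisation of the minimal polynomial of `S` into
coprime prime powers, there is a polynomial `h` with `h ≡ a` modulo the power of each factor.
Then `h(S)` is annihilated by a product of `(X - a)`'s and `S - h(S)` by a product of
`X² + b²`'s, so their spectra are real and purely imaginary respectively. All three components
are polynomials in `A`, which gives the commutation criterion.

Uniqueness. For commuting endomorphisms every complex eigenvalue of the sum is a sum of
eigenvalues of the summands (look for an eigenvector of one summand inside an eigenspace of the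
sum). Uniqueness of the Jordan–Chevalley decomposition identifies the nilpotent parts; then
`A_h' - A_h = A_e - A_e'` is semisimple with spectrum both real and purely imaginary, hence zero.
-/

open Polynomial Module

namespace Module.End

section Eigenvalues

variable {K V : Type*} [Field K] [AddCommGroup V] [Module K V]

theorem HasEigenvalue.isRoot_of_aeval_eq_zero {f : End K V} {μ : K} (hμ : f.HasEigenvalue μ)
    {p : K[X]} (hp : aeval f p = 0) : p.IsRoot μ :=
  (isRoot_of_hasEigenvalue hμ).dvd (minpoly.dvd K f hp)

theorem exists_hasEigenvalue_add_of_commute [IsAlgClosed K] [FiniteDimensional K V]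
    {f g : End K V} (hfg : Commute f g) {z : K} (hz : (f + g).HasEigenvalue z) :
    ∃ μ ν, f.HasEigenvalue μ ∧ g.HasEigenvalue ν ∧ μ + ν = z := by
  have hfE : ∀ x ∈ (f + g).eigenspace z, f x ∈ (f + g).eigenspace z :=
    mapsTo_genEigenspace_of_comm ((Commute.refl f).add_left hfg.symm) z 1
  have : Nontrivial ((f + g).eigenspace z) := Submodule.nontrivial_iff_ne_bot.2 hz
  obtain ⟨μ, hμ⟩ := exists_eigenvalue (f.restrict hfE)
  obtain ⟨x, hx⟩ := hμ.exists_hasEigenvector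
  have hx0 : (x : V) ≠ 0 := by simpa using hx.2
  have hfx : f x = μ • (x : V) := congrArg Subtype.val hx.apply_eq_smul
  have hgx : g x = (z - μ) • (x : V) := by
    rw [sub_smul, ← hfx, ← mem_eigenspace_iff.1 x.2, LinearMap.add_apply, add_sub_cancel_left]
  exact ⟨μ, z - μ, hasEigenvalue_of_hasEigenvector ⟨mem_eigenspace_iff.2 hfx, hx0⟩,
    hasEigenvalue_of_hasEigenvector ⟨mem_eigenspace_iff.2 hgx, hx0⟩, add_sub_cancel _ _⟩

end Eigenvalues

section BaseChange

variable {K L V : Type*} [Field K] [Field L] [Algebra K L] [AddCommGroup V] [Module K V]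

theorem hasEigenvalue_baseChange_iff [FiniteDimensional K V] (f : End K V) (z : L) :
    HasEigenvalue (f.baseChange L) z ↔ aeval z f.charpoly = 0 := by
  rw [hasEigenvalue_iff_isRoot_charpoly, LinearMap.charpoly_baseChange, IsRoot,
    eval_map_algebraMap]

theorem HasEigenvalue.aeval_eq_zero_of_baseChange {f : End K V} {z : L}
    (hz : HasEigenvalue (f.baseChange L) z) {p : K[X]} (hp : aeval f p = 0) : aeval z p = 0 := by
  rw [← eval_map_algebraMap]
  refine hz.isRoot_of_aeval_eq_zero ?_
  rw [aeval_map_algebraMap]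
  exact (aeval_algHom_apply (baseChangeHom K L V) f p).trans (by rw [hp, map_zero])

end BaseChange

end Module.End

namespace Polynomial

variable {K L : Type*} [Field K] [Field L] [Algebra K L]

def RootsIn (p : K[X]) (G : AddSubgroup L) : Prop :=
  ∀ z : L, aeval z p = 0 → z ∈ G

variable {G : AddSubgroup L}

theorem rootsIn_one : RootsIn (1 : K[X]) G := by
  simp [RootsIn]

theorem rootsIn_iff_forall_mem_aroots {p : K[X]} (hp : p ≠ 0) :
    RootsIn p G ↔ ∀ z ∈ p.aroots L, z ∈ G := by
  simp [RootsIn, hp]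

theorem RootsIn.mul {p q : K[X]} (hp : RootsIn p G) (hq : RootsIn q G) : RootsIn (p * q) G :=
  fun z hz => (mul_eq_zero.1 ((aeval z).map_mul p q ▸ hz)).elim (hp z) (hq z)

theorem RootsIn.pow {p : K[X]} (hp : RootsIn p G) (n : ℕ) : RootsIn (p ^ n) G :=
  fun z hz => hp z (pow_eq_zero_iff'.1 ((aeval z).map_pow p n ▸ hz)).1

theorem RootsIn.comp_neg {p : K[X]} (hp : RootsIn p G) : RootsIn (p.comp (-X)) G := by
  intro z hz
  rw [aeval_comp, map_neg, aeval_X] at hz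
  simpa using hp (-z) hz

end Polynomial

namespace Module.End

variable {K L V : Type*} [Field K] [Field L] [Algebra K L] [AddCommGroup V] [Module K V]
  [FiniteDimensional K V] {G : AddSubgroup L}

theorem rootsIn_charpoly_of_aeval_eq_zero {f : End K V} {p : K[X]} (hp : aeval f p = 0)
    (h : RootsIn p G) : RootsIn f.charpoly G :=
  fun z hz => h z (((hasEigenvalue_baseChange_iff f z).2 hz).aeval_eq_zero_of_baseChange hp)

theorem rootsIn_charpoly_neg {f : End K V} (h : RootsIn f.charpoly G) :
    RootsIn (-f).charpoly G :=
  rootsIn_charpoly_of_aeval_eq_zero (p := f.charpoly.comp (-X))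
    (by rw [aeval_comp, map_neg, aeval_X, neg_neg, LinearMap.aeval_self_charpoly]) h.comp_neg

theorem rootsIn_charpoly_add_of_commute [IsAlgClosed L] {f g : End K V} (hfg : Commute f g)
    (hf : RootsIn f.charpoly G) (hg : RootsIn g.charpoly G) : RootsIn (f + g).charpoly G := by
  intro z hz
  rw [← hasEigenvalue_baseChange_iff, LinearMap.baseChange_add] at hz
  obtain ⟨μ, ν, hμ, hν, rfl⟩ :=
    exists_hasEigenvalue_add_of_commute (hfg.map (baseChangeHom K L V)) hz
  exact G.add_mem (hf μ ((hasEigenvalue_baseChange_iff f μ).1 hμ))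
    (hg ν ((hasEigenvalue_baseChange_iff g ν).1 hν))

theorem rootsIn_charpoly_sub_of_commute [IsAlgClosed L] {f g : End K V} (hfg : Commute f g)
    (hf : RootsIn f.charpoly G) (hg : RootsIn g.charpoly G) : RootsIn (f - g).charpoly G :=
  sub_eq_add_neg f g ▸ rootsIn_charpoly_add_of_commute hfg.neg_right hf (rootsIn_charpoly_neg hg)

theorem isNilpotent_of_rootsIn_charpoly_bot [IsAlgClosed L] {f : End K V}
    (h : RootsIn f.charpoly (⊥ : AddSubgroup L)) : IsNilpotent f := by
  rw [LinearMap.isNilpotent_iff_charpoly]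
  apply map_injective (algebraMap K L) (FaithfulSMul.algebraMap_injective K L)
  have hmonic := (LinearMap.charpoly_monic f).map (algebraMap K L)
  have hroots : (f.charpoly.map (algebraMap K L)).roots = Multiset.replicate (finrank K V) 0 := by
    refine Multiset.eq_replicate.2 ⟨?_, fun z hz => AddSubgroup.mem_bot.1 (h z ?_)⟩
    · rw [← (IsAlgClosed.splits _).natDegree_eq_card_roots,
        (LinearMap.charpoly_monic f).natDegree_map, LinearMap.charpoly_natDegree]
    · exact (mem_aroots.1 hz).2
  rw [(IsAlgClosed.splits _).eq_prod_roots_of_monic hmonic, hroots]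
  simp

theorem eq_of_add_eq_add_of_rootsIn_charpoly [PerfectField K] [IsAlgClosed L]
    {G₁ G₂ : AddSubgroup L} (hG : G₁ ⊓ G₂ = ⊥) {f₁ f₂ g₁ g₂ : End K V}
    (hf₁ : f₁.IsSemisimple) (hg₁ : g₁.IsSemisimple) (h₁ : Commute f₁ g₁) (h₂ : Commute f₂ g₂)
    (hrf₁ : RootsIn f₁.charpoly G₁) (hrg₁ : RootsIn g₁.charpoly G₁)
    (hrf₂ : RootsIn f₂.charpoly G₂) (hrg₂ : RootsIn g₂.charpoly G₂)
    (h : f₁ + f₂ = g₁ + g₂) : f₁ = g₁ := by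
  have hd : f₁ - g₁ = g₂ - f₂ := by rw [sub_eq_sub_iff_add_eq_add, h, add_comm]
  have hnil : IsNilpotent (f₁ - g₁) := by
    refine isNilpotent_of_rootsIn_charpoly_bot (L := L) fun z hz => hG ▸ ⟨?_, ?_⟩
    · exact rootsIn_charpoly_sub_of_commute h₁ hrf₁ hrg₁ z hz
    · exact rootsIn_charpoly_sub_of_commute h₂.symm hrg₂ hrf₂ z (hd ▸ hz)
  exact sub_eq_zero.1 (eq_zero_of_isNilpotent_isSemisimple hnil (hf₁.sub_of_commute h₁ hg₁))

end Module.End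

theorem Polynomial.dvd_comp_of_dvd_sub {R : Type*} [CommRing R] {m u v q : R[X]}
    (huv : m ∣ u - v) (hv : m ∣ q.comp v) : m ∣ q.comp u := by
  have : u - v ∣ q.comp u - q.comp v := by
    have := sub_dvd_eval_sub u v (q.map C)
    rwa [eval_map, eval_map] at this
  simpa using dvd_add (huv.trans this) hv

namespace RealJordan

def realLine : AddSubgroup ℂ := Complex.imAddGroupHom.ker

def imaginaryLine : AddSubgroup ℂ := Complex.reAddGroupHom.ker

theorem realLine_inf_imaginaryLine : realLine ⊓ imaginaryLine = ⊥ := by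
  ext z
  simp [realLine, imaginaryLine, Complex.ext_iff, and_comm]

theorem rootsIn_X_sub_C (a : ℝ) : RootsIn (X - C a) realLine := by
  intro z hz
  simp [realLine, sub_eq_zero.1 (by simpa using hz)]

theorem rootsIn_X_sq_add_C_sq (b : ℝ) : RootsIn (X ^ 2 + C b ^ 2) imaginaryLine := by
  intro z hz
  have : (z - b * Complex.I) * (z + b * Complex.I) = 0 := by
    simp only [map_add, map_pow, aeval_X, aeval_C, Complex.coe_algebraMap] at hz
    linear_combination hz - (b : ℂ) ^ 2 * Complex.I_sq
  rcases mul_eq_zero.1 this with h | h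
  · simp [imaginaryLine, sub_eq_zero.1 h]
  · simp [imaginaryLine, eq_neg_of_add_eq_zero_left h]

/-- In `ℝ[X] ⧸ (m)`, `h` is a real part of `X`: at an endomorphism annihilated by `m`,
`h` has real spectrum and `X - h` purely imaginary spectrum. -/
def HasReImSplitting (m : ℝ[X]) : Prop :=
  ∃ h qh qe : ℝ[X], m ∣ qh.comp h ∧ m ∣ qe.comp (X - h) ∧ RootsIn qh realLine ∧
    RootsIn qe imaginaryLine

theorem hasReImSplitting_of_isUnit {u : ℝ[X]} (hu : IsUnit u) : HasReImSplitting u :=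
  ⟨0, 1, 1, by simpa using hu.dvd, by simpa using hu.dvd, rootsIn_one, rootsIn_one⟩

theorem exists_dvd_sq_add_sq_of_irreducible {p : ℝ[X]} (hp : Irreducible p) :
    ∃ a b : ℝ, p ∣ (X - C a) ^ 2 + C b ^ 2 := by
  obtain ⟨z, hz⟩ := IsAlgClosed.exists_aeval_eq_zero ℂ p (degree_pos_of_irreducible hp).ne'
  refine ⟨z.re, z.im, (hp.dvd_iff_aeval_eq_zero hz).1 ?_⟩
  apply Complex.ext <;> simp [sq]

theorem hasReImSplitting_pow_of_irreducible {p : ℝ[X]} (hp : Irreducible p) (n : ℕ) :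
    HasReImSplitting (p ^ n) := by
  obtain ⟨a, b, hab⟩ := exists_dvd_sq_add_sq_of_irreducible hp
  refine ⟨C a, (X - C a) ^ n, (X ^ 2 + C b ^ 2) ^ n, ?_, ?_, (rootsIn_X_sub_C a).pow n,
    (rootsIn_X_sq_add_C_sq b).pow n⟩
  · simpa using pow_dvd_pow_of_dvd (dvd_zero p) n
  · simpa using pow_dvd_pow_of_dvd hab n

theorem HasReImSplitting.mul {m₁ m₂ : ℝ[X]} (hm : IsCoprime m₁ m₂) (h₁ : HasReImSplitting m₁)
    (h₂ : HasReImSplitting m₂) : HasReImSplitting (m₁ * m₂) := by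
  obtain ⟨h₁, qh₁, qe₁, hdh₁, hde₁, hrh₁, hre₁⟩ := h₁
  obtain ⟨h₂, qh₂, qe₂, hdh₂, hde₂, hrh₂, hre₂⟩ := h₂
  obtain ⟨a, b, hab⟩ := hm
  set h := h₁ * (b * m₂) + h₂ * (a * m₁)
  have hm₁ : m₁ ∣ h - h₁ := ⟨a * (h₂ - h₁), by linear_combination h₁ * hab⟩
  have hm₂ : m₂ ∣ h - h₂ := ⟨b * (h₁ - h₂), by linear_combination h₂ * hab⟩
  refine ⟨h, qh₁ * qh₂, qe₁ * qe₂, ?_, ?_, hrh₁.mul hrh₂, hre₁.mul hre₂⟩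
  · rw [mul_comp]
    exact mul_dvd_mul (dvd_comp_of_dvd_sub hm₁ hdh₁) (dvd_comp_of_dvd_sub hm₂ hdh₂)
  · rw [mul_comp]
    exact mul_dvd_mul (dvd_comp_of_dvd_sub (by rwa [sub_sub_sub_cancel_left, dvd_sub_comm]) hde₁)
      (dvd_comp_of_dvd_sub (by rwa [sub_sub_sub_cancel_left, dvd_sub_comm]) hde₂)

theorem hasReImSplitting_of_ne_zero {m : ℝ[X]} (hm : m ≠ 0) : HasReImSplitting m := by
  induction m using UniqueFactorizationMonoid.induction_on_coprime with
  | h0 => exact absurd rfl hm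
  | h1 hu => exact hasReImSplitting_of_isUnit hu
  | hpr n hp => exact hasReImSplitting_pow_of_irreducible hp.irreducible n
  | hcp hxy hx hy =>
    exact (hx (left_ne_zero_of_mul hm)).mul hxy.isCoprime (hy (right_ne_zero_of_mul hm))

open Module.End

variable {V : Type*} [AddCommGroup V] [Module ℝ V] [FiniteDimensional ℝ V]

theorem exists_rootsIn_charpoly_aeval (f : End ℝ V) :
    ∃ h : ℝ[X], RootsIn (aeval f h).charpoly realLine ∧
      RootsIn (aeval f (X - h)).charpoly imaginaryLine := by
  obtain ⟨h, qh, qe, hdh, hde, hrh, hre⟩ := hasReImSplitting_of_ne_zero (minpoly.ne_zero_of_finite ℝ f)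
  refine ⟨h, rootsIn_charpoly_of_aeval_eq_zero ?_ hrh, rootsIn_charpoly_of_aeval_eq_zero ?_ hre⟩
  · rw [← aeval_comp]
    exact minpoly.dvd_iff.1 hdh
  · rw [← aeval_comp]
    exact minpoly.dvd_iff.1 hde

theorem exists_mem_adjoin_realJordan (A : End ℝ V) :
    ∃ An ∈ Algebra.adjoin ℝ {A}, ∃ Ah ∈ Algebra.adjoin ℝ {A}, ∃ Ae ∈ Algebra.adjoin ℝ {A},
      IsNilpotent An ∧ Ah.IsSemisimple ∧ RootsIn Ah.charpoly realLine ∧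
      Ae.IsSemisimple ∧ RootsIn Ae.charpoly imaginaryLine ∧ A = An + Ah + Ae := by
  obtain ⟨N, hN, S, hS, hN_nil, hS_ss, hA⟩ := A.exists_isNilpotent_isSemisimple
  obtain ⟨h, hrh, hre⟩ := exists_rootsIn_charpoly_aeval S
  have hS_adjoin (q : ℝ[X]) : aeval S q ∈ Algebra.adjoin ℝ {A} :=
    Algebra.adjoin_le (Set.singleton_subset_iff.2 hS) (aeval_mem_adjoin_singleton ℝ S)
  refine ⟨N, hN, _, hS_adjoin h, _, hS_adjoin (X - h), hN_nil, hS_ss.aeval h, hrh,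
    hS_ss.aeval _, hre, ?_⟩
  rw [map_sub, aeval_X, add_add_sub_cancel, hA]

end RealJordan

open RealJordan Module.End

/-- Real Jordan decomposition: every endomorphism `A` of a finite-dimensional real vector
space decomposes uniquely as `A = A_n + A_h + A_e` with `A_n` nilpotent, `A_h`
diagonalizable over `ℝ`, `A_e` semisimple with purely imaginary spectrum, all pairwise
commuting; and `B` commutes with `A` iff it commutes with each component.
Here "diagonalizable over ℝ" is encoded as: semisimple with all complex roots of the
characteristic polynomial real; "semisimple with purely imaginary spectrum" as:
semisimple with all complex roots of the characteristic polynomial purely imaginary. -/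
theorem stmt_13 (V : Type*) [AddCommGroup V] [Module ℝ V] [FiniteDimensional ℝ V]
    (A : Module.End ℝ V) :
    ∃ An Ah Ae : Module.End ℝ V,
      (IsNilpotent An ∧
        (Ah.IsSemisimple ∧
          ∀ z : ℂ, z ∈ ((LinearMap.charpoly Ah).map (algebraMap ℝ ℂ)).roots → z.im = 0) ∧
        (Ae.IsSemisimple ∧
          ∀ z : ℂ, z ∈ ((LinearMap.charpoly Ae).map (algebraMap ℝ ℂ)).roots → z.re = 0) ∧
        A = An + Ah + Ae ∧
        Commute An Ah ∧ Commute An Ae ∧ Commute Ah Ae ∧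
        (∀ B : Module.End ℝ V,
          Commute B A ↔ (Commute B An ∧ Commute B Ah ∧ Commute B Ae))) ∧
      ∀ An' Ah' Ae' : Module.End ℝ V,
        (IsNilpotent An' ∧
          (Ah'.IsSemisimple ∧
            ∀ z : ℂ, z ∈ ((LinearMap.charpoly Ah').map (algebraMap ℝ ℂ)).roots → z.im = 0) ∧
          (Ae'.IsSemisimple ∧
            ∀ z : ℂ, z ∈ ((LinearMap.charpoly Ae').map (algebraMap ℝ ℂ)).roots → z.re = 0) ∧
          A = An' + Ah' + Ae' ∧
          Commute An' Ah' ∧ Commute An' Ae' ∧ Commute Ah' Ae') →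
        An' = An ∧ Ah' = Ah ∧ Ae' = Ae := by
  obtain ⟨An, hAn, Ah, hAh, Ae, hAe, hn, hsh, hrh, hse, hre, hA⟩ := exists_mem_adjoin_realJordan A
  have hcomm {B C : End ℝ V} (hB : Commute B A) (hC : C ∈ Algebra.adjoin ℝ {A}) : Commute B C :=
    Algebra.commute_of_mem_adjoin_singleton_of_commute hC hB
  have hcommA {C : End ℝ V} (hC : C ∈ Algebra.adjoin ℝ {A}) : Commute C A :=
    (Algebra.commute_of_mem_adjoin_self hC).symm
  have hroots {f : End ℝ V} {G : AddSubgroup ℂ} :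
      RootsIn f.charpoly G ↔ ∀ z ∈ f.charpoly.aroots ℂ, z ∈ G :=
    rootsIn_iff_forall_mem_aroots (LinearMap.charpoly_monic f).ne_zero
  refine ⟨An, Ah, Ae, ⟨hn, ⟨hsh, hroots.1 hrh⟩, ⟨hse, hroots.1 hre⟩, hA,
    hcomm (hcommA hAn) hAh, hcomm (hcommA hAn) hAe, hcomm (hcommA hAh) hAe, fun B =>
      ⟨fun hB => ⟨hcomm hB hAn, hcomm hB hAh, hcomm hB hAe⟩,
        fun ⟨h₁, h₂, h₃⟩ => hA ▸ (h₁.add_right h₂).add_right h₃⟩⟩, ?_⟩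
  rintro An' Ah' Ae' ⟨hn', ⟨hsh', hrh'⟩, ⟨hse', hre'⟩, hA', h₁₂, h₁₃, h₂₃⟩
  have hAh'A : Commute Ah' A := hA' ▸ (h₁₂.symm.add_right (Commute.refl _)).add_right h₂₃
  have hAe'A : Commute Ae' A := hA' ▸ (h₁₃.symm.add_right h₂₃.symm).add_right (Commute.refl _)
  obtain ⟨rfl, hs⟩ := isNilpotent_isSemisimple_unique hn' (hsh'.add_of_commute h₂₃ hse') hn
    (hsh.add_of_commute (hcomm (hcommA hAh) hAe) hse) (h₁₂.add_right h₁₃)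
    (hcomm (hcommA hAn) (add_mem hAh hAe)) (by rw [← add_assoc, ← add_assoc, ← hA, ← hA'])
  obtain rfl := eq_of_add_eq_add_of_rootsIn_charpoly realLine_inf_imaginaryLine hsh' hsh
    (hcomm hAh'A hAh) (hcomm hAe'A hAe) (hroots.2 hrh') hrh (hroots.2 hre') hre hs
  exact ⟨rfl, rfl, add_left_cancel hs⟩
end

section
/- Let L be a real semisimple Lie algebra and D : L → L a derivation. Then the semisimple part D_s and nilpotent part D_n of the (complex-linear extension of the) Jordan decomposition of D, as well as the components D_h (real part of spectrum) and D_e = D_s - D_h, are again derivations of L. -/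
/-!
Complexify. On the generalized eigenspace of `D_ℂ` for the eigenvalue `λ`, the semisimple part
`D_h + D_e` acts as `λ` (uniqueness of the Jordan decomposition), and `D_h`, being semisimple with
real spectrum while `D_e` has imaginary spectrum, acts as `Re λ`. Since `D_ℂ` is a derivation,
`[L_ℂ^λ, L_ℂ^μ] ⊆ L_ℂ^{λ+μ}`, and as `λ ↦ λ` and `λ ↦ Re λ` are additive, `D_h + D_e` and `D_h` are
derivations of `L_ℂ`, hence of `L`. Then `D_e` and `D_n` are differences of derivations.
-/

open TensorProduct Finset

def Module.End.IsLieDerivation {R L : Type*} [CommRing R] [LieRing L] [LieAlgebra R L]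
    (f : Module.End R L) : Prop :=
  ∀ x y : L, f ⁅x, y⁆ = ⁅f x, y⁆ + ⁅x, f y⁆

namespace Module.End.IsLieDerivation

variable {R L : Type*} [CommRing R] [LieRing L] [LieAlgebra R L] {f g : Module.End R L}

lemma add (hf : f.IsLieDerivation) (hg : g.IsLieDerivation) : (f + g).IsLieDerivation := by
  intro x y
  simp only [LinearMap.add_apply, hf x y, hg x y, add_lie, lie_add]
  abel

lemma sub (hf : f.IsLieDerivation) (hg : g.IsLieDerivation) : (f - g).IsLieDerivation := by
  intro x y
  simp only [LinearMap.sub_apply, hf x y, hg x y, sub_lie, lie_sub]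
  abel

lemma sub_smul_one_apply_lie (hf : f.IsLieDerivation) (a b : R) (x y : L) :
    (f - (a + b) • 1) ⁅x, y⁆ = ⁅(f - a • 1) x, y⁆ + ⁅x, (f - b • 1) y⁆ := by
  simp only [LinearMap.sub_apply, LinearMap.smul_apply, Module.End.one_apply, hf x y,
    sub_lie, lie_sub, add_smul, LinearMap.add_apply, smul_lie, lie_smul]
  abel

lemma sub_smul_one_pow_apply_lie (hf : f.IsLieDerivation) (a b : R) (n : ℕ) (x y : L) :
    ((f - (a + b) • 1) ^ n) ⁅x, y⁆ = ∑ ij ∈ antidiagonal n,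
      n.choose ij.1 • ⁅((f - a • 1) ^ ij.1) x, ((f - b • 1) ^ ij.2) y⁆ := by
  induction n generalizing x y with
  | zero => simp
  | succ n ih =>
    rw [sum_antidiagonal_choose_succ_nsmul
      (fun i j => ⁅((f - a • 1) ^ i) x, ((f - b • 1) ^ j) y⁆) n, pow_succ, Module.End.mul_apply,
      hf.sub_smul_one_apply_lie, map_add, ih, ih, add_comm]
    congr 1
    refine sum_congr rfl fun ij hij => ?_
    rw [Nat.choose_symm_of_eq_add (mem_antidiagonal.1 hij).symm, pow_succ, Module.End.mul_apply]

lemma lie_mem_maxGenEigenspace (hf : f.IsLieDerivation) {a b : R} {x y : L}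
    (hx : x ∈ f.maxGenEigenspace a) (hy : y ∈ f.maxGenEigenspace b) :
    ⁅x, y⁆ ∈ f.maxGenEigenspace (a + b) := by
  rw [Module.End.mem_maxGenEigenspace] at hx hy ⊢
  obtain ⟨p, hp⟩ := hx
  obtain ⟨q, hq⟩ := hy
  refine ⟨p + q, ?_⟩
  rw [hf.sub_smul_one_pow_apply_lie]
  refine sum_eq_zero fun ij hij => ?_
  rcases le_or_gt p ij.1 with hpi | hpi
  · rw [Module.End.pow_map_zero_of_le hpi hp, zero_lie, smul_zero]
  · have hqj : q ≤ ij.2 := by linarith [mem_antidiagonal.1 hij]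
    rw [Module.End.pow_map_zero_of_le hqj hq, lie_zero, smul_zero]

lemma _root_.LieDerivation.isLieDerivation (D : LieDerivation R L L) :
    IsLieDerivation (D : Module.End R L) := fun x y => by
  rw [add_comm]; exact D.apply_lie_eq_add x y

lemma _root_.LieDerivation.isLieDerivation_baseChange (A : Type*) [CommRing A] [Algebra R A]
    (D : LieDerivation R L L) : IsLieDerivation ((D : Module.End R L).baseChange A) :=
  fun x y => (Lie.Derivation.ofLieDerivation A D).isLieDerivation x y

lemma of_baseChange {A : Type*} [CommRing A] [Algebra R A] [FaithfulSMul R A] [Module.Flat R L]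
    (hg : IsLieDerivation (g.baseChange A)) : g.IsLieDerivation := by
  intro x y
  apply Module.Flat.tensorProduct_mk_injective R L A
  simpa [LieAlgebra.ExtendScalars.bracket_tmul, tmul_add] using hg (1 ⊗ₜ x) (1 ⊗ₜ y)

end Module.End.IsLieDerivation

namespace Module.End

lemma IsSemisimple.baseChange {K A V : Type*} [Field K] [PerfectField K] [Field A] [Algebra K A]
    [AddCommGroup V] [Module K V] [FiniteDimensional K V] {f : Module.End K V}
    (hf : f.IsSemisimple) : IsSemisimple (f.baseChange A) := by
  have hsep : ((minpoly K f).map (algebraMap K A)).Separable :=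
    (PerfectField.separable_iff_squarefree.mpr hf.minpoly_squarefree).map
  apply isSemisimple_of_squarefree_aeval_eq_zero hsep.squarefree
  rw [Polynomial.aeval_map_algebraMap, show f.baseChange A = baseChangeHom K A V f from rfl,
    Polynomial.aeval_algHom_apply, minpoly.aeval, map_zero]

lemma HasEigenvalue.mem_roots_charpoly_map_of_baseChange {R A M : Type*} [CommRing R] [CommRing A]
    [IsDomain A] [Algebra R A] [AddCommGroup M] [Module R M] [Module.Free R M] [Module.Finite R M]
    {f : Module.End R M} {μ : A} (h : HasEigenvalue (f.baseChange A) μ) :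
    μ ∈ (f.charpoly.map (algebraMap R A)).roots := by
  rw [← LinearMap.charpoly_baseChange, Polynomial.mem_roots (LinearMap.charpoly_monic _).ne_zero,
    ← hasEigenvalue_iff_isRoot_charpoly]
  exact h

lemma IsSemisimple.eq_smul_one_of_forall_hasEigenvalue {K V : Type*} [Field K] [IsAlgClosed K]
    [AddCommGroup V] [Module K V] [FiniteDimensional K V] {f : Module.End K V} {c : K}
    (hf : f.IsSemisimple) (hc : ∀ b, f.HasEigenvalue b → b = c) : f = c • 1 := by
  have htop : f.eigenspace c = ⊤ := by
    refine top_le_iff.mp ((f.iSup_maxGenEigenspace_eq_top).symm.le.trans (iSup_le fun b => ?_))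
    rw [hf.isFinitelySemisimple.maxGenEigenspace_eq_eigenspace]
    by_cases hb : f.HasEigenvalue b
    · rw [hc b hb]
    · rw [hasEigenvalue_iff, not_not] at hb
      rw [hb]; exact bot_le
  ext x
  exact mem_eigenspace_iff.mp (htop ▸ Submodule.mem_top)

lemma IsLieDerivation.of_forall_mem_maxGenEigenspace {K L : Type*} [Field K] [IsAlgClosed K]
    [LieRing L] [LieAlgebra K L] [FiniteDimensional K L] {f g : Module.End K L}
    (hf : f.IsLieDerivation) (χ : K →+ K)
    (hg : ∀ a, ∀ x ∈ f.maxGenEigenspace a, g x = χ a • x) : g.IsLieDerivation := by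
  have hspan (x : L) : x ∈ ⨆ a, f.maxGenEigenspace a := by
    rw [f.iSup_maxGenEigenspace_eq_top]; exact Submodule.mem_top
  intro x y
  induction hspan x using Submodule.iSup_induction' with
  | zero => simp
  | add x₁ x₂ _ _ h₁ h₂ => simp only [add_lie, map_add, h₁, h₂]; abel
  | mem a x hx =>
    induction hspan y using Submodule.iSup_induction' with
    | zero => simp
    | add y₁ y₂ _ _ h₁ h₂ => simp only [lie_add, map_add, h₁, h₂]; abel
    | mem b y hy =>
      rw [hg a x hx, hg b y hy, hg _ _ (hf.lie_mem_maxGenEigenspace hx hy), map_add, add_smul,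
        smul_lie, lie_smul]

lemma apply_eq_re_smul_of_mem_maxGenEigenspace {V : Type*} [AddCommGroup V]
    [Module ℂ V] [FiniteDimensional ℂ V] {f h e : Module.End ℂ V}
    (hnil : IsNilpotent (f - (h + e))) (hh : h.IsSemisimple) (he : e.IsSemisimple)
    (hfh : Commute f h) (hfe : Commute f e) (hhe : Commute h e)
    (hh_real : ∀ b, h.HasEigenvalue b → b.im = 0) (he_imag : ∀ b, e.HasEigenvalue b → b.re = 0)
    {a : ℂ} {x : V} (hx : x ∈ f.maxGenEigenspace a) : h x = (a.re : ℂ) • x := by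
  have hsum (y : V) (hy : y ∈ f.maxGenEigenspace a) : (h + e) y = a • y :=
    apply_eq_of_mem_of_comm_of_isFinitelySemisimple_of_isNil hy (hfh.add_right hfe)
      (hh.add_of_commute hhe he).isFinitelySemisimple hnil
  have hW : ∀ y ∈ f.maxGenEigenspace a, h y ∈ f.maxGenEigenspace a :=
    fun y hy => mapsTo_maxGenEigenspace_of_comm hfh a hy
  have hrestrict : h.restrict hW = (a.re : ℂ) • 1 := by
    refine (hh.restrict hW).eq_smul_one_of_forall_hasEigenvalue fun b hb => ?_
    obtain ⟨w, hw⟩ := hb.exists_hasEigenvector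
    have hw0 : (w : V) ≠ 0 := by simpa using hw.2
    have hhw : h w = b • (w : V) := congrArg Subtype.val hw.apply_eq_smul
    have hew : e w = (a - b) • (w : V) := by
      rw [sub_smul, ← hsum w w.2, LinearMap.add_apply, hhw]; abel
    have him := hh_real b (hasEigenvalue_of_hasEigenvector ⟨mem_eigenspace_iff.mpr hhw, hw0⟩)
    have hre := he_imag _ (hasEigenvalue_of_hasEigenvector ⟨mem_eigenspace_iff.mpr hew, hw0⟩)
    rw [Complex.sub_re, sub_eq_zero] at hre
    exact Complex.ext (by simpa using hre.symm) (by simpa using him)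
  exact congrArg Subtype.val (LinearMap.congr_fun hrestrict ⟨x, hx⟩)

end Module.End

theorem stmt_14_general (L : Type*) [LieRing L] [LieAlgebra ℝ L] [FiniteDimensional ℝ L]
    (D : LieDerivation ℝ L L)
    (Dn Dh De : Module.End ℝ L)
    (hn : IsNilpotent Dn)
    (hh : Dh.IsSemisimple ∧
      ∀ z : ℂ, z ∈ ((LinearMap.charpoly Dh).map (algebraMap ℝ ℂ)).roots → z.im = 0)
    (he : De.IsSemisimple ∧
      ∀ z : ℂ, z ∈ ((LinearMap.charpoly De).map (algebraMap ℝ ℂ)).roots → z.re = 0)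
    (hsum : (D.toLinearMap : Module.End ℝ L) = Dn + Dh + De)
    (hc1 : Commute Dn Dh) (hc2 : Commute Dn De) (hc3 : Commute Dh De) :
    (∀ x y : L, Dn ⁅x, y⁆ = ⁅Dn x, y⁆ + ⁅x, Dn y⁆) ∧
      (∀ x y : L, Dh ⁅x, y⁆ = ⁅Dh x, y⁆ + ⁅x, Dh y⁆) ∧
      (∀ x y : L, De ⁅x, y⁆ = ⁅De x, y⁆ + ⁅x, De y⁆) ∧
      (∀ x y : L, (Dh + De) ⁅x, y⁆ = ⁅(Dh + De) x, y⁆ + ⁅x, (Dh + De) y⁆) := by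
  set φ := Module.End.baseChangeHom ℝ ℂ L
  have hD : (φ D).IsLieDerivation := D.isLieDerivation_baseChange ℂ
  have hDn : Dn = D - (Dh + De) := by rw [hsum]; abel
  have hDh_comm : Commute (D : Module.End ℝ L) Dh :=
    hsum ▸ (hc1.add_left (.refl Dh)).add_left hc3.symm
  have hDe_comm : Commute (D : Module.End ℝ L) De := hsum ▸ (hc2.add_left hc3).add_left (.refl De)
  have hnil : IsNilpotent (φ D - (φ Dh + φ De)) := by
    rw [← map_add, ← map_sub, ← hDn]; exact hn.map φ
  have hDs_apply (a : ℂ) (x : ℂ ⊗[ℝ] L) (hx : x ∈ (φ D).maxGenEigenspace a) :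
      φ (Dh + De) x = a • x := by
    rw [map_add]
    exact Module.End.apply_eq_of_mem_of_comm_of_isFinitelySemisimple_of_isNil hx
      ((hDh_comm.map φ).add_right (hDe_comm.map φ))
      ((hh.1.baseChange.add_of_commute (hc3.map φ) he.1.baseChange).isFinitelySemisimple) hnil
  have hDh_apply (a : ℂ) (x : ℂ ⊗[ℝ] L) (hx : x ∈ (φ D).maxGenEigenspace a) :
      φ Dh x = (a.re : ℂ) • x :=
    Module.End.apply_eq_re_smul_of_mem_maxGenEigenspace hnil hh.1.baseChange he.1.baseChange
      (hDh_comm.map φ) (hDe_comm.map φ) (hc3.map φ)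
      (fun b hb => hh.2 b hb.mem_roots_charpoly_map_of_baseChange)
      (fun b hb => he.2 b hb.mem_roots_charpoly_map_of_baseChange) hx
  have hDs : (Dh + De).IsLieDerivation :=
    .of_baseChange (A := ℂ) (hD.of_forall_mem_maxGenEigenspace (.id ℂ) hDs_apply)
  have hDh : Dh.IsLieDerivation :=
    .of_baseChange (A := ℂ) (hD.of_forall_mem_maxGenEigenspace
      ((Complex.ofRealHom : ℝ →+ ℂ).comp Complex.reAddGroupHom) hDh_apply)
  refine ⟨?_, hDh, ?_, hDs⟩
  · rw [hDn]; exact D.isLieDerivation.sub hDs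
  · rw [show De = Dh + De - Dh by abel]; exact hDs.sub hDh

/-- For a derivation `D` of a finite-dimensional real semisimple Lie algebra `L`, the
components `D_n`, `D_h`, `D_e` (and hence `D_s = D_h + D_e`) of the real Jordan
decomposition of `D` are again derivations of `L`. -/
theorem stmt_14 (L : Type*) [LieRing L] [LieAlgebra ℝ L] [FiniteDimensional ℝ L]
    [LieAlgebra.IsSemisimple ℝ L]
    (D : LieDerivation ℝ L L)
    (Dn Dh De : Module.End ℝ L)
    (hn : IsNilpotent Dn)
    (hh : Dh.IsSemisimple ∧
      ∀ z : ℂ, z ∈ ((LinearMap.charpoly Dh).map (algebraMap ℝ ℂ)).roots → z.im = 0)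
    (he : De.IsSemisimple ∧
      ∀ z : ℂ, z ∈ ((LinearMap.charpoly De).map (algebraMap ℝ ℂ)).roots → z.re = 0)
    (hsum : (D.toLinearMap : Module.End ℝ L) = Dn + Dh + De)
    (hc1 : Commute Dn Dh) (hc2 : Commute Dn De) (hc3 : Commute Dh De) :
    (∀ x y : L, Dn ⁅x, y⁆ = ⁅Dn x, y⁆ + ⁅x, Dn y⁆) ∧
      (∀ x y : L, Dh ⁅x, y⁆ = ⁅Dh x, y⁆ + ⁅x, Dh y⁆) ∧
      (∀ x y : L, De ⁅x, y⁆ = ⁅De x, y⁆ + ⁅x, De y⁆) ∧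
      (∀ x y : L, (Dh + De) ⁅x, y⁆ = ⁅(Dh + De) x, y⁆ + ⁅x, (Dh + De) y⁆) :=
  stmt_14_general L D Dn Dh De hn hh he hsum hc1 hc2 hc3
end

section
/- Let D be an endomorphism of a complex vector space L with Jordan decomposition D = D_s + D_n. Then for the generalized eigenspace decomposition of D, one has: if a bilinear bracket on L satisfies [L^λ, L^μ] ⊆ L^{λ+μ} for all λ, μ (where L^λ is the generalized λ-eigenspace of D), then D_s is a derivation of the bracket. -/
open Module.End

theorem leibniz_of_apply_eq_smul_of_mem {R M : Type*} [CommSemiring R] [AddCommMonoid M]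
    [Module R M] (V : R → Submodule R M) (hV : ⨆ a, V a = ⊤) (B : M →ₗ[R] M →ₗ[R] M)
    (hB : ∀ a b x y, x ∈ V a → y ∈ V b → B x y ∈ V (a + b)) (f : Module.End R M)
    (hf : ∀ a x, x ∈ V a → f x = a • x) (x y : M) :
    f (B x y) = B (f x) y + B x (f y) := by
  have hx : x ∈ ⨆ a, V a := hV ▸ Submodule.mem_top
  have hy : y ∈ ⨆ b, V b := hV ▸ Submodule.mem_top
  induction hx using Submodule.iSup_induction' with
  | mem a x hx =>
    induction hy using Submodule.iSup_induction' with
    | mem b y hy =>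
      rw [hf a x hx, hf b y hy, hf (a + b) _ (hB a b x y hx hy)]
      simp only [map_smul, LinearMap.smul_apply, add_smul]
    | zero => simp
    | add y z _ _ ihy ihz => simp only [map_add, ihy, ihz]; abel
  | zero => simp
  | add x z _ _ ihx ihz => simp only [map_add, LinearMap.add_apply, ihx, ihz]; abel

/-- If `D = D_s + D_n` is the Jordan decomposition of an endomorphism of a
finite-dimensional complex vector space and a bilinear bracket satisfies
`[L^λ, L^μ] ⊆ L^{λ+μ}` on generalized eigenspaces of `D`, then `D_s` is a derivation of
the bracket. -/
theorem stmt_15 (L : Type*) [AddCommGroup L] [Module ℂ L] [FiniteDimensional ℂ L]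
    (D Ds Dn : Module.End ℂ L)
    (hs : Ds.IsSemisimple) (hn : IsNilpotent Dn) (hcomm : Commute Ds Dn)
    (hsum : D = Ds + Dn)
    (B : L →ₗ[ℂ] L →ₗ[ℂ] L)
    (hB : ∀ (lam mu : ℂ) (x y : L), x ∈ D.maxGenEigenspace lam →
      y ∈ D.maxGenEigenspace mu → B x y ∈ D.maxGenEigenspace (lam + mu)) :
    ∀ x y : L, Ds (B x y) = B (Ds x) y + B x (Ds y) := by
  subst hsum
  have hDDs : Commute (Ds + Dn) Ds := (Commute.refl Ds).add_left hcomm.symm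
  -- On a generalized eigenspace of `D`, `Ds - λ` is semisimple and, being `(D - λ) - Dn`,
  -- nilpotent; hence it vanishes there.
  have hDs : ∀ lam x, x ∈ (Ds + Dn).maxGenEigenspace lam → Ds x = lam • x := fun lam x hx =>
    apply_eq_of_mem_of_comm_of_isFinitelySemisimple_of_isNil hx hDDs hs.isFinitelySemisimple
      (by rwa [add_sub_cancel_left])
  exact leibniz_of_apply_eq_smul_of_mem _ (iSup_maxGenEigenspace_eq_top _) B hB Ds hDs
end

section
/- Let (n_k) be a strictly increasing sequence of positive integers. Then for Lebesgue-almost every s > 0, the set of fractional parts {n_k/s : k ∈ ℕ} is dense in [0,1]. -/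
/-! Fix `0 ≤ a < b ≤ 1` and let `B` be the set of `t` with `{u_k t} ∉ (a, b)` for every `k`,
where `u_k → ∞`. For `N > 0`, every closed ball of radius `1/N` contains an interval of
length `(b - a)/N` on which `{N t} ∈ (a, b)`, so `B` fills at most the fraction
`1 - (b - a)/2` of the balls of radii `1/u_k → 0` around any point. Hence `B` has no
Lebesgue density point and is null. Taking the countably many rational `a, b` gives
density of `{u_k t}` for almost every `t`, and `t ↦ 1/t` maps null subsets of `(0, ∞)` to
null sets. -/

open MeasureTheory Set Filter Metric

lemma fract_mul_mem_Ioo {N t a b : ℝ} (hN : 0 < N) (m : ℤ)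
    (ht : t ∈ Ioo ((m + a) / N) ((m + b) / N)) (ha : 0 ≤ a) (hb : b ≤ 1) :
    Int.fract (N * t) ∈ Ioo a b := by
  rw [mem_Ioo, div_lt_iff₀ hN, lt_div_iff₀ hN, mul_comm t] at ht
  have hfloor : ⌊N * t⌋ = m := by
    rw [Int.floor_eq_iff]
    constructor <;> linarith [ht.1, ht.2]
  rw [← Int.self_sub_floor, hfloor]
  constructor <;> linarith [ht.1, ht.2]

lemma exists_Ioo_div_subset_closedBall {N a b : ℝ} (hN : 0 < N) (ha : 0 ≤ a) (hb : b ≤ 1)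
    (t₀ : ℝ) : ∃ m : ℤ, Ioo ((m + a) / N) ((m + b) / N) ⊆ closedBall t₀ N⁻¹ := by
  refine ⟨⌈N * t₀ - 1⌉, fun t ht => ?_⟩
  have hm₁ := Int.le_ceil (N * t₀ - 1)
  have hm₂ := Int.ceil_lt_add_one (N * t₀ - 1)
  rw [mem_Ioo, div_lt_iff₀ hN, lt_div_iff₀ hN, mul_comm t] at ht
  rw [mem_closedBall, Real.dist_eq, ← one_div, le_div_iff₀ hN, mul_comm, ← abs_of_pos hN,
    ← abs_mul, mul_sub, abs_le]
  constructor <;> linarith [ht.1, ht.2]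

lemma volume_fract_mul_notMem_Ioo_inter_closedBall_div_le {N a b : ℝ} (hN : 0 < N)
    (ha : 0 ≤ a) (hab : a ≤ b) (hb : b ≤ 1) (t₀ : ℝ) :
    volume ({t | Int.fract (N * t) ∉ Ioo a b} ∩ closedBall t₀ N⁻¹) /
        volume (closedBall t₀ N⁻¹) ≤ ENNReal.ofReal (1 - (b - a) / 2) := by
  obtain ⟨m, hm⟩ := exists_Ioo_div_subset_closedBall hN ha hb t₀
  have hsub : {t | Int.fract (N * t) ∉ Ioo a b} ∩ closedBall t₀ N⁻¹ ⊆
      closedBall t₀ N⁻¹ \ Ioo ((m + a) / N) ((m + b) / N) :=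
    fun t ⟨ht, hball⟩ => ⟨hball, fun hG => ht (fract_mul_mem_Ioo hN m hG ha hb)⟩
  calc _ ≤ volume (closedBall t₀ N⁻¹ \ Ioo ((m + a) / N) ((m + b) / N)) /
        volume (closedBall t₀ N⁻¹) := by gcongr
    _ = ENNReal.ofReal (2 * N⁻¹ - (b - a) / N) / ENNReal.ofReal (2 * N⁻¹) := by
      rw [measure_sdiff hm measurableSet_Ioo.nullMeasurableSet measure_Ioo_lt_top.ne,
        Real.volume_closedBall, Real.volume_Ioo, ← sub_div, add_sub_add_left_eq_sub,
        ← ENNReal.ofReal_sub _ (div_nonneg (sub_nonneg.2 hab) hN.le)]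
    _ = ENNReal.ofReal (1 - (b - a) / 2) := by
      rw [← ENNReal.ofReal_div_of_pos (by positivity)]
      congr 1
      field_simp

lemma volume_setOf_forall_fract_mul_notMem_Ioo {u : ℕ → ℝ} (hu : Tendsto u atTop atTop)
    {a b : ℝ} (ha : 0 ≤ a) (hab : a < b) (hb : b ≤ 1) :
    volume {t | ∀ k, Int.fract (u k * t) ∉ Ioo a b} = 0 := by
  set B := {t | ∀ k, Int.fract (u k * t) ∉ Ioo a b}
  rw [← Measure.restrict_eq_zero, ← ae_eq_bot, ← eventually_false_iff_eq_bot]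
  filter_upwards [Besicovitch.ae_tendsto_measure_inter_div volume B] with t₀ ht₀
  have hdensity : ∀ᶠ k in atTop, volume (B ∩ closedBall t₀ (u k)⁻¹) /
      volume (closedBall t₀ (u k)⁻¹) ≤ ENNReal.ofReal (1 - (b - a) / 2) := by
    filter_upwards [hu.eventually_gt_atTop 0] with k hk
    refine le_trans ?_ (volume_fract_mul_notMem_Ioo_inter_closedBall_div_le hk ha hab.le hb t₀)
    gcongr
    exact fun t ht => ht k
  have hone := le_of_tendsto (ht₀.comp (tendsto_inv_atTop_nhdsGT_zero.comp hu)) hdensity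
  rw [← ENNReal.ofReal_one, ENNReal.ofReal_le_ofReal_iff (by linarith)] at hone
  linarith

lemma Icc_subset_closure_of_forall_rat {S : Set ℝ}
    (h : ∀ a b : ℚ, 0 ≤ a → a < b → b ≤ 1 → (Ioo (a : ℝ) b ∩ S).Nonempty) :
    Icc 0 1 ⊆ closure S := by
  rintro x ⟨hx₀, hx₁⟩
  rw [Real.isTopologicalBasis_Ioo_rat.mem_closure_iff]
  simp only [mem_iUnion, mem_singleton_iff]
  rintro _ ⟨a, b, hab, rfl⟩ ⟨hax, hxb⟩
  have ha₁ : a < 1 := by exact_mod_cast hax.trans_le hx₁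
  have hb₀ : 0 < b := by exact_mod_cast hx₀.trans_lt hxb
  obtain ⟨y, ⟨hay, hyb⟩, hyS⟩ := h (max a 0) (min b 1) (le_max_right _ _)
    (max_lt (lt_min hab ha₁) (lt_min hb₀ one_pos)) (min_le_right _ _)
  push_cast at hay hyb
  exact ⟨y, ⟨(le_max_left _ _).trans_lt hay, hyb.trans_le (min_le_left _ _)⟩, hyS⟩

theorem ae_Icc_subset_closure_range_fract_mul {u : ℕ → ℝ} (hu : Tendsto u atTop atTop) :
    ∀ᵐ t : ℝ, Icc 0 1 ⊆ closure (range fun k => Int.fract (u k * t)) := by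
  have hrat : ∀ᵐ t : ℝ, ∀ a b : ℚ, 0 ≤ a → a < b → b ≤ 1 →
      (Ioo (a : ℝ) b ∩ range fun k => Int.fract (u k * t)).Nonempty := by
    refine ae_all_iff.2 fun a => ae_all_iff.2 fun b => ?_
    simp only [eventually_imp_distrib_left]
    intro ha hab hb
    filter_upwards [measure_eq_zero_iff_ae_notMem.1 (volume_setOf_forall_fract_mul_notMem_Ioo hu
      (a := a) (b := b) (by exact_mod_cast ha) (by exact_mod_cast hab) (by exact_mod_cast hb))]
      with t ht
    simp only [not_forall, not_not] at ht
    obtain ⟨k, hk⟩ := ht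
    exact ⟨_, hk, k, rfl⟩
  filter_upwards [hrat] with t ht
  exact Icc_subset_closure_of_forall_rat ht

lemma ae_restrict_Ioi_inv {p : ℝ → Prop} (h : ∀ᵐ t, p t) :
    ∀ᵐ s ∂volume.restrict (Ioi 0), p s⁻¹ := by
  rw [ae_iff] at h ⊢
  rw [Measure.restrict_apply' measurableSet_Ioi]
  have hinv : DifferentiableOn ℝ (·⁻¹) ({t | ¬p t} ∩ Ioi (0 : ℝ)) :=
    fun t ht => (differentiableAt_inv ht.2.ne').differentiableWithinAt
  refine measure_mono_null ?_ (addHaar_image_eq_zero_of_differentiableOn_of_addHaar_eq_zero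
    volume hinv (measure_mono_null inter_subset_left h))
  rintro s ⟨hs, hs₀⟩
  exact ⟨s⁻¹, ⟨hs, mem_Ioi.2 (inv_pos.2 hs₀)⟩, inv_inv s⟩

theorem stmt_19_general (n : ℕ → ℕ) (hmono : StrictMono n) :
    ∀ᵐ s ∂(volume.restrict (Set.Ioi (0:ℝ))),
      Set.Icc (0:ℝ) 1 ⊆ closure (Set.range fun k : ℕ => Int.fract ((n k : ℝ) / s)) := by
  have hn : Tendsto (fun k => (n k : ℝ)) atTop atTop :=
    tendsto_natCast_atTop_atTop.comp hmono.tendsto_atTop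
  filter_upwards [ae_restrict_Ioi_inv (ae_Icc_subset_closure_range_fract_mul hn)] with s hs
  simpa only [div_eq_mul_inv] using hs

/-- For a strictly increasing sequence of positive integers `(n_k)`, for Lebesgue-almost
every `s > 0` the set of fractional parts `{n_k / s}` is dense in `[0,1]`. -/
theorem stmt_19 (n : ℕ → ℕ) (hpos : ∀ k, 0 < n k) (hmono : StrictMono n) :
    ∀ᵐ s ∂(volume.restrict (Set.Ioi (0:ℝ))),
      Set.Icc (0:ℝ) 1 ⊆ closure (Set.range fun k : ℕ => Int.fract ((n k : ℝ) / s)) :=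
  stmt_19_general n hmono
end
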